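/- arXiv:2404.15727 — 6 statements merged into one kernel-verified Lean document; each statement's English description precedes it below -/
import Mathlib

section
/- Let n ≥ 1, 0 ≤ k ≤ n, and let σ, σ' ∈ S_k^n be two strictly increasing maps {0,…,k} → {0,…,n}. Then k! · ∫_{F_{σ'}} ω_σ = δ_{σ,σ'}, i.e. the integral of the Whitney form ω_σ over the k-subsimplex F_{σ'} (with ordered vertices v_{σ'(0)},…,v_{σ'(k)}) equals 1/k! if σ = σ' and 0 otherwise. -/
open MeasureTheory Matrix

noncomputable section

/-- A differential `k`-form on `ℝⁿ`, recorded via its pointwise evaluation on `k`-tuples of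
vectors: `ω x (u 0, …, u (k-1)) : ℝ`. -/
abbrev Form (n k : ℕ) : Type := (Fin n → ℝ) → (Fin k → (Fin n → ℝ)) → ℝ

/-- `ω` is a polynomial differential form: all coefficient functions are polynomial. -/
def IsPolyForm {n k : ℕ} (ω : Form n k) : Prop :=
  ∀ u : Fin k → (Fin n → ℝ), ∃ p : MvPolynomial (Fin n) ℝ,
    ∀ x, ω x u = MvPolynomial.eval x p

/-- `ω` is a polynomial differential form of degree at most `r`. -/
def IsPolyFormDeg {n k : ℕ} (r : ℕ) (ω : Form n k) : Prop :=
  ∀ u : Fin k → (Fin n → ℝ), ∃ p : MvPolynomial (Fin n) ℝ,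
    p.totalDegree ≤ r ∧ ∀ x, ω x u = MvPolynomial.eval x p

/-- `ω` is a continuous differential form. -/
def ContinuousForm {n k : ℕ} (ω : Form n k) : Prop :=
  ∀ u : Fin k → (Fin n → ℝ), Continuous fun x => ω x u

/-- The standard `k`-simplex `Δᵏ = {x ∈ ℝᵏ : xⱼ ≥ 0, Σⱼ xⱼ ≤ 1}`. -/
def stdSimplexSet (k : ℕ) : Set (Fin k → ℝ) :=
  {x | (∀ j, 0 ≤ x j) ∧ ∑ j, x j ≤ 1}

/-- Integral of the `k`-form `ω` over the affine `k`-simplex with ordered vertices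
`p 0, …, p k`:  `∫_{Δᵏ} ω(p₀ + Σⱼ xⱼ (pⱼ − p₀))(p₁ − p₀, …, p_k − p₀) dx`. -/
def simpIntegral {n k : ℕ} (ω : Form n k) (p : Fin (k + 1) → (Fin n → ℝ)) : ℝ :=
  ∫ x in stdSimplexSet k,
    ω (p 0 + ∑ j : Fin k, x j • (p j.succ - p 0)) (fun j => p j.succ - p 0)

/-- The Whitney form `ω_σ = Σᵢ (−1)ⁱ λ_{σ(i)} dλ_{σ(0)} ∧ … ∧ ω̂ᵢ ∧ … ∧ dλ_{σ(k)}`, where the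
wedge of the (constant) differentials `dλⱼ` is evaluated as a determinant. -/
def whitney {n k : ℕ} (lam : Fin (n + 1) → ((Fin n → ℝ) →ᵃ[ℝ] ℝ))
    (σ : Fin (k + 1) → Fin (n + 1)) : Form n k :=
  fun x u => ∑ i : Fin (k + 1), (-1 : ℝ) ^ (i : ℕ) * lam (σ i) x *
    Matrix.det (Matrix.of fun a b : Fin k => (lam (σ (i.succAbove a))).linear (u b))

/-- `λ^α ω_σ`, the Whitney form scaled by the barycentric monomial `λ^α`. -/
def scaledWhitney {n k : ℕ} (lam : Fin (n + 1) → ((Fin n → ℝ) →ᵃ[ℝ] ℝ))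
    (α : Fin (n + 1) → ℕ) (σ : Fin (k + 1) → Fin (n + 1)) : Form n k :=
  fun x u => (∏ i, lam i x ^ α i) * whitney lam σ x u

/-- The space `P_r^- Λ^k(T)`: the span of `p · ω_σ` for `p` a polynomial of degree `≤ r − 1`
and `σ` strictly increasing. -/
def PrMinus (n k r : ℕ) (lam : Fin (n + 1) → ((Fin n → ℝ) →ᵃ[ℝ] ℝ)) :
    Submodule ℝ (Form n k) :=
  Submodule.span ℝ {η : Form n k | ∃ (p : MvPolynomial (Fin n) ℝ)
    (σ : Fin (k + 1) → Fin (n + 1)), StrictMono σ ∧ p.totalDegree ≤ r - 1 ∧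
    η = fun x u => MvPolynomial.eval x p * whitney lam σ x u}

/-- The small `k`-simplex `s_{(α,σ)}`, given by its ordered vertices
`(v_{σ(j)} + Σᵢ αᵢ vᵢ)/r`. -/
def smallSimplex {n k : ℕ} (v : Fin (n + 1) → (Fin n → ℝ)) (r : ℕ)
    (σ : Fin (k + 1) → Fin (n + 1)) (α : Fin (n + 1) → ℕ) :
    Fin (k + 1) → (Fin n → ℝ) :=
  fun j => (r : ℝ)⁻¹ • (v (σ j) + ∑ i, (α i : ℝ) • v i)

/-- The index set of the minimal set `X_{r,min}^k(T)`: pairs `(σ, α)` with `σ` strictly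
increasing, `|α| = r − 1` and `αᵢ = 0` for every `i < σ(0)`. -/
def MinIdx (n k r : ℕ) : Type :=
  {q : (Fin (k + 1) → Fin (n + 1)) × (Fin (n + 1) → ℕ) //
    StrictMono q.1 ∧ (∑ i, q.2 i) = r - 1 ∧ ∀ i, i < q.1 0 → q.2 i = 0}

/-- The interpolation operator `Π ω = Σᵢ (∫_{sᵢ} ω) ω_{sᵢ}` built from a dual family `ωs`. -/
def lagrangeProj {n k N : ℕ} (s : Fin N → Fin (k + 1) → (Fin n → ℝ))
    (ωs : Fin N → Form n k) (ω : Form n k) : Form n k :=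
  fun x u => ∑ i, simpIntegral ω (s i) * ωs i x u

/-- Least squares error functional `Σᵢ (∫_{sᵢ} (η − ω))²`. -/
def lsError {n k M : ℕ} (s : Fin M → Fin (k + 1) → (Fin n → ℝ))
    (ω η : Form n k) : ℝ :=
  ∑ i, (simpIntegral (η - ω) (s i)) ^ 2

/-!
Laplace expansion along the row of values `λ_{σ(i)}(x)` writes the Whitney form as a
`(k+1) × (k+1)` determinant. Pulled back to an affine simplex with vertices `q₀, …, q_k`, row
operations turn it into the constant `det (λ_{σ(i)}(q_j))`. On `F_{σ'}` this is the determinant of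
the incidence matrix `[σ(i) = σ'(j)]`, which is the identity if `σ = σ'` and has a zero row
otherwise. The integral is thus `δ_{σσ'} · vol(Δᵏ) = δ_{σσ'} / k!`.
-/

open Pointwise

theorem StrictMono.eq_of_range_subset {m : ℕ} {α : Type*} [LinearOrder α] {f g : Fin m → α}
    (hf : StrictMono f) (hg : StrictMono g) (h : Set.range g ⊆ Set.range f) : f = g := by
  refine (hf.range_inj hg).1 (Set.eq_of_subset_of_ncard_le h ?_ (Set.finite_range f)).symm
  rw [Set.ncard_range_of_injective hf.injective, Set.ncard_range_of_injective hg.injective]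

theorem det_of_ite_strictMono_eq {R : Type*} [CommRing R] {m n : ℕ} {σ σ' : Fin m → Fin n}
    (hσ : StrictMono σ) (hσ' : StrictMono σ') :
    det (of fun j i => if σ i = σ' j then (1 : R) else 0) = if σ = σ' then 1 else 0 := by
  split_ifs with h
  · subst h
    convert det_one (R := R) (n := Fin m)
    ext j i
    simp [one_apply, hσ.injective.eq_iff, eq_comm]
  · obtain ⟨j, hj⟩ : ∃ j, σ' j ∉ Set.range σ := by
      by_contra! hall
      exact h (hσ.eq_of_range_subset hσ' (Set.range_subset_iff.2 hall))
    exact det_eq_zero_of_row_eq_zero j fun i => if_neg fun hi => hj ⟨i, hi⟩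

section Whitney

variable {n k : ℕ} (lam : Fin (n + 1) → ((Fin n → ℝ) →ᵃ[ℝ] ℝ))
    (σ : Fin (k + 1) → Fin (n + 1))

theorem whitney_eq_det (x : Fin n → ℝ) (u : Fin k → Fin n → ℝ) :
    whitney lam σ x u = det (of (Fin.cons (fun i => lam (σ i) x)
      fun (b : Fin k) i => (lam (σ i)).linear (u b))) := by
  rw [det_succ_row_zero]
  refine Finset.sum_congr rfl fun i _ => ?_
  rw [← det_transpose]
  rfl

theorem whitney_simplex_eq_det (q : Fin (k + 1) → Fin n → ℝ) (y : Fin k → ℝ) :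
    whitney lam σ (q 0 + ∑ b : Fin k, y b • (q b.succ - q 0)) (fun b => q b.succ - q 0) =
      det (of fun j i => lam (σ i) (q j)) := by
  set D : Matrix (Fin (k + 1)) (Fin (k + 1)) ℝ := of (Fin.cons (fun i => lam (σ i) (q 0))
    fun (b : Fin k) i => lam (σ i) (q b.succ) - lam (σ i) (q 0))
  have hlin : ∀ i (b : Fin k), (lam (σ i)).linear (q b.succ - q 0) = D b.succ i := fun i b => by
    simp [D, ← vsub_eq_sub, AffineMap.linearMap_vsub]
  have hval : ∀ (f : (Fin n → ℝ) →ᵃ[ℝ] ℝ) p w, f (p + w) = f p + f.linear w :=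
    fun f p w => by rw [add_comm, ← vadd_eq_add, AffineMap.map_vadd, vadd_eq_add, add_comm]
  -- `λ` is affine, so the row of values at the point is `D 0 + ∑ b, y b • D b.succ`
  have hrow : D.updateRow 0 (∑ j, (Fin.cons 1 y : Fin (k + 1) → ℝ) j • D j) =
      of (Fin.cons (fun i => lam (σ i) (q 0 + ∑ b : Fin k, y b • (q b.succ - q 0)))
        fun (b : Fin k) i => (lam (σ i)).linear (q b.succ - q 0)) := by
    ext j i
    refine Fin.cases ?_ (fun b => ?_) j
    · simp [Fin.sum_univ_succ, D, hlin, hval]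
    · simp [hlin]
  rw [whitney_eq_det, ← hrow, det_updateRow_sum, Fin.cons_zero, one_smul]
  -- the rows of `D` are those of `(λ_{σ i}(q j))` minus row `0`, except row `0` itself
  refine det_eq_of_forall_row_eq_smul_add_const (Fin.cons 0 fun _ => -1) 0 rfl fun j i => ?_
  refine Fin.cases ?_ (fun b => ?_) j <;> simp [D, sub_eq_add_neg]

end Whitney

theorem measurableSet_stdSimplexSet (k : ℕ) : MeasurableSet (stdSimplexSet k) := by
  unfold stdSimplexSet
  measurability

theorem smul_stdSimplexSet {k : ℕ} {c : ℝ} (hc : 0 ≤ c) :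
    c • stdSimplexSet k = {y | (∀ j, 0 ≤ y j) ∧ ∑ j, y j ≤ c} := by
  ext y
  constructor
  · rintro ⟨z, ⟨hz, hsum⟩, rfl⟩
    refine ⟨fun j => mul_nonneg hc (hz j), ?_⟩
    simpa [← Finset.mul_sum] using mul_le_of_le_one_right hc hsum
  · rintro ⟨hy, hsum⟩
    rcases hc.eq_or_lt with rfl | hc
    · have hy0 := (Finset.sum_eq_zero_iff_of_nonneg fun j _ => hy j).1
        (le_antisymm hsum (Finset.sum_nonneg fun j _ => hy j))
      exact ⟨0, ⟨fun _ => le_rfl, by simp⟩, funext fun j => by simp [hy0 j]⟩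
    · refine ⟨c⁻¹ • y, ⟨fun j => mul_nonneg (inv_nonneg.2 hc.le) (hy j), ?_⟩,
        smul_inv_smul₀ hc.ne' y⟩
      simpa [← Finset.mul_sum, inv_mul_le_iff₀ hc] using hsum

theorem cons_mem_stdSimplexSet_iff {k : ℕ} (t : ℝ) (y : Fin k → ℝ) :
    Fin.cons t y ∈ stdSimplexSet (k + 1) ↔
      0 ≤ t ∧ (∀ j, 0 ≤ y j) ∧ ∑ j, y j ≤ 1 - t := by
  simp only [stdSimplexSet, Set.mem_ofPred_eq, Fin.forall_fin_succ, Fin.sum_cons, Fin.cons_zero,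
    Fin.cons_succ, and_assoc, ← le_sub_iff_add_le']

theorem volume_cons_mem_stdSimplexSet {k : ℕ} (t : ℝ) :
    volume {y : Fin k → ℝ | Fin.cons t y ∈ stdSimplexSet (k + 1)} =
      (Set.Icc (0 : ℝ) 1).indicator (fun t => ENNReal.ofReal ((1 - t) ^ k)) t *
        volume (stdSimplexSet k) := by
  simp only [cons_mem_stdSimplexSet_iff]
  by_cases ht : t ∈ Set.Icc (0 : ℝ) 1
  · have h1t : 0 ≤ 1 - t := by linarith [ht.2]
    simp only [ht.1, true_and, Set.indicator_of_mem ht]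
    rw [← smul_stdSimplexSet h1t, Measure.addHaar_smul_of_nonneg volume h1t,
      Module.finrank_fin_fun]
  · rw [Set.indicator_of_notMem ht, zero_mul]
    refine measure_mono_null (fun y ⟨h0, hy, hsum⟩ => ht ⟨h0, ?_⟩) measure_empty
    linarith [Finset.sum_nonneg fun j (_ : j ∈ Finset.univ) => hy j]

theorem lintegral_one_sub_pow (k : ℕ) :
    ∫⁻ t in Set.Icc (0 : ℝ) 1, ENNReal.ofReal ((1 - t) ^ k) =
      ENNReal.ofReal (1 / (k + 1)) := by
  rw [← ofReal_integral_eq_lintegral_ofReal]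
  · rw [integral_Icc_eq_integral_Ioc, ← intervalIntegral.integral_of_le zero_le_one,
      intervalIntegral.integral_comp_sub_left (fun s => s ^ k) 1]
    simp
  · exact (by fun_prop : Continuous fun t : ℝ => (1 - t) ^ k).integrableOn_Icc
  · exact (ae_restrict_iff' measurableSet_Icc).2
      (.of_forall fun t ht => pow_nonneg (by linarith [ht.2]) k)

theorem volume_stdSimplexSet (k : ℕ) :
    volume (stdSimplexSet k) = ENNReal.ofReal (1 / k.factorial) := by
  induction k with
  | zero =>
    rw [show stdSimplexSet 0 = Set.univ by ext x; simp [stdSimplexSet], volume_pi,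
      Measure.pi_univ]
    simp
  | succ k ih =>
    let e := MeasurableEquiv.piFinSuccAbove (fun _ : Fin (k + 1) => ℝ) 0
    have hmp : MeasurePreserving e.symm (volume.prod volume) volume :=
      (measurePreserving_piFinSuccAbove (fun _ => volume) 0).symm
    have hslice : ∀ t : ℝ, Prod.mk t ⁻¹' (e.symm ⁻¹' stdSimplexSet (k + 1)) =
        {y | Fin.cons t y ∈ stdSimplexSet (k + 1)} := fun t => by
      ext y
      simp only [MeasurableEquiv.piFinSuccAbove_symm_apply, Fin.insertNthEquiv_zero,
        Set.mem_preimage, Set.mem_ofPred_eq, e]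
      exact Iff.rfl
    have hmeas : Measurable fun t : ℝ => ENNReal.ofReal ((1 - t) ^ k) := by fun_prop
    rw [← hmp.measure_preimage (measurableSet_stdSimplexSet _).nullMeasurableSet,
      Measure.prod_apply (e.symm.measurable (measurableSet_stdSimplexSet _))]
    simp_rw [hslice, volume_cons_mem_stdSimplexSet]
    rw [lintegral_mul_const _ (hmeas.indicator measurableSet_Icc),
      lintegral_indicator measurableSet_Icc, lintegral_one_sub_pow, ih,
      ← ENNReal.ofReal_mul (by positivity), Nat.factorial_succ]
    push_cast
    rw [div_mul_div_comm, one_mul]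

theorem simpIntegral_eq_of_forall_eq {n k : ℕ} {ω : Form n k} {p : Fin (k + 1) → Fin n → ℝ}
    {c : ℝ} (h : ∀ y : Fin k → ℝ,
      ω (p 0 + ∑ j : Fin k, y j • (p j.succ - p 0)) (fun j => p j.succ - p 0) = c) :
    simpIntegral ω p = c / k.factorial := by
  rw [simpIntegral, setIntegral_congr_fun (measurableSet_stdSimplexSet k) fun y _ => h y,
    setIntegral_const, measureReal_def, volume_stdSimplexSet, ENNReal.toReal_ofReal (by positivity),
    smul_eq_mul, one_div_mul_eq_div]

theorem whitney_integral_dual_general {n k : ℕ}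
    (v : Fin (n + 1) → (Fin n → ℝ))
    (lam : Fin (n + 1) → ((Fin n → ℝ) →ᵃ[ℝ] ℝ))
    (hlam : ∀ i j, lam i (v j) = if i = j then 1 else 0)
    (σ σ' : Fin (k + 1) → Fin (n + 1)) (hσ : StrictMono σ) (hσ' : StrictMono σ') :
    (Nat.factorial k : ℝ) * simpIntegral (whitney lam σ) (fun j => v (σ' j)) =
      if σ = σ' then 1 else 0 := by
  have hpullback : ∀ y : Fin k → ℝ,
      whitney lam σ (v (σ' 0) + ∑ b : Fin k, y b • (v (σ' b.succ) - v (σ' 0)))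
        (fun b => v (σ' b.succ) - v (σ' 0)) = if σ = σ' then 1 else 0 := fun y => by
    rw [whitney_simplex_eq_det lam σ (fun j => v (σ' j)) y]
    simp only [hlam]
    exact det_of_ite_strictMono_eq hσ hσ'
  rw [simpIntegral_eq_of_forall_eq hpullback, mul_div_cancel₀ _ (by positivity)]

/-- Duality of lowest-order Whitney forms with subsimplex integration:
`k! ∫_{F_{σ'}} ω_σ = δ_{σ,σ'}`. -/
theorem whitney_integral_dual {n k : ℕ} (hn : 1 ≤ n) (hk : k ≤ n)
    (v : Fin (n + 1) → (Fin n → ℝ)) (hv : AffineIndependent ℝ v)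
    (lam : Fin (n + 1) → ((Fin n → ℝ) →ᵃ[ℝ] ℝ))
    (hlam : ∀ i j, lam i (v j) = if i = j then 1 else 0)
    (σ σ' : Fin (k + 1) → Fin (n + 1)) (hσ : StrictMono σ) (hσ' : StrictMono σ') :
    (Nat.factorial k : ℝ) * simpIntegral (whitney lam σ) (fun j => v (σ' j)) =
      if σ = σ' then 1 else 0 :=
  whitney_integral_dual_general v lam hlam σ σ' hσ hσ'
end
end

section
/- Let n ≥ 1 and 0 ≤ k ≤ n. The Whitney forms {ω_σ : σ ∈ S_k^n} are linearly independent over ℝ in the space of polynomial k-forms on ℝ^n; consequently the space P_1^− Λ^k(T) := span{ω_σ : σ ∈ S_k^n} has dimension binom(n+1, k+1). -/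
open MeasureTheory Matrix

noncomputable section

/-!
The Whitney forms are dual to the functionals
`ω ↦ ω(v_{τ 0})(v_{τ 1} - v_{τ 0}, …, v_{τ k} - v_{τ 0})`, `τ ∈ S_k^n`.
Evaluating `ω_ρ` there, the term of `λ_{ρ i}` vanishes unless `ρ i = τ 0`; the remaining
determinant of the `dλ_{ρ j}` on the edges of `τ` is `det 1` when `ρ = τ`, and otherwise it has
a zero row, coming from a vertex of `ρ` that is not a vertex of `τ`. So the Whitney forms are
linearly independent, and there are as many of them as `(k + 1)`-subsets of `{0, …, n}`.
-/

def strictMonoEquivOrderEmbedding (α β : Type*) [LinearOrder α] [Preorder β] :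
    {f : α → β // StrictMono f} ≃ (α ↪o β) where
  toFun f := OrderEmbedding.ofStrictMono f.1 f.2
  invFun e := ⟨e, e.strictMono⟩
  left_inv _ := rfl
  right_inv _ := rfl

theorem Nat.card_strictMono_fin (m p : ℕ) :
    Nat.card {σ : Fin m → Fin p // StrictMono σ} = p.choose m := by
  rw [Nat.card_congr ((strictMonoEquivOrderEmbedding _ _).trans
    Set.powersetCard.ofFinEmbEquiv), Set.powersetCard.card, Nat.card_fin]

theorem StrictMono.exists_notMem_range_of_ne {m : ℕ} {β : Type*} [LinearOrder β]
    {ρ τ : Fin m → β} (hρ : StrictMono ρ) (hτ : StrictMono τ) (h : ρ ≠ τ) :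
    ∃ j, ρ j ∉ Set.range τ := by
  by_contra! hsub
  refine h ((hρ.range_inj hτ).1 (Set.eq_of_subset_of_ncard_le (Set.range_subset_iff.2 hsub) ?_
    (Set.finite_range τ)))
  rw [Set.ncard_range_of_injective hρ.injective, Set.ncard_range_of_injective hτ.injective]

def edgeEval {n k : ℕ} (p : Fin (k + 1) → (Fin n → ℝ)) : Form n k →ₗ[ℝ] ℝ where
  toFun ω := ω (p 0) fun j => p j.succ - p 0
  map_add' _ _ := rfl
  map_smul' _ _ := rfl

section Whitney

variable {n k : ℕ} {v : Fin (n + 1) → (Fin n → ℝ)} {lam : Fin (n + 1) → ((Fin n → ℝ) →ᵃ[ℝ] ℝ)}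

theorem barycentric_linear_sub (hlam : ∀ i j, lam i (v j) = if i = j then 1 else 0)
    (i a b : Fin (n + 1)) :
    (lam i).linear (v b - v a) = (if i = b then 1 else 0) - (if i = a then 1 else 0) := by
  rw [← vsub_eq_sub, AffineMap.linearMap_vsub, vsub_eq_sub, hlam, hlam]

theorem edgeEval_whitney_self (hlam : ∀ i j, lam i (v j) = if i = j then 1 else 0)
    {τ : Fin (k + 1) → Fin (n + 1)} (hτ : StrictMono τ) :
    edgeEval (v ∘ τ) (whitney lam τ) = 1 := by
  have hid : (Matrix.of fun a b : Fin k =>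
      (lam (τ a.succ)).linear (v (τ b.succ) - v (τ 0))) = 1 := by
    ext a b
    simp only [Matrix.of_apply, Matrix.one_apply, barycentric_linear_sub hlam,
      hτ.injective.eq_iff, Fin.succ_inj, Fin.succ_ne_zero, if_false, sub_zero]
  simp only [edgeEval, whitney, LinearMap.coe_mk, AddHom.coe_mk, Function.comp_apply]
  rw [Fin.sum_univ_succ, Finset.sum_eq_zero, add_zero]
  · rw [Fin.succAbove_zero, hid, Matrix.det_one, hlam, if_pos rfl]
    norm_num
  · intro i _
    rw [hlam, if_neg (hτ.injective.ne (Fin.succ_ne_zero i)), mul_zero, zero_mul]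

theorem edgeEval_whitney_of_ne (hlam : ∀ i j, lam i (v j) = if i = j then 1 else 0)
    {ρ τ : Fin (k + 1) → Fin (n + 1)} (hρ : StrictMono ρ) (hτ : StrictMono τ) (h : ρ ≠ τ) :
    edgeEval (v ∘ τ) (whitney lam ρ) = 0 := by
  obtain ⟨j, hj⟩ := hρ.exists_notMem_range_of_ne hτ h
  simp only [edgeEval, whitney, LinearMap.coe_mk, AddHom.coe_mk, Function.comp_apply]
  refine Finset.sum_eq_zero fun i _ => ?_
  by_cases hi : ρ i = τ 0
  · obtain ⟨a, rfl⟩ := Fin.exists_succAbove_eq (show j ≠ i by rintro rfl; exact hj ⟨0, hi.symm⟩)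
    rw [Matrix.det_eq_zero_of_row_eq_zero a fun b => ?_, mul_zero]
    rw [Matrix.of_apply, barycentric_linear_sub hlam, if_neg fun h => hj ⟨b.succ, h.symm⟩,
      if_neg fun h => hj ⟨0, h.symm⟩, sub_zero]
  · rw [hlam, if_neg hi, mul_zero, zero_mul]

theorem whitney_linearIndependent (hlam : ∀ i j, lam i (v j) = if i = j then 1 else 0) :
    LinearIndependent ℝ
      (fun σ : {σ : Fin (k + 1) → Fin (n + 1) // StrictMono σ} => whitney lam σ.val) := by
  classical
  let Φ := LinearMap.pi fun τ : {τ : Fin (k + 1) → Fin (n + 1) // StrictMono τ} =>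
    edgeEval (v ∘ τ.val)
  have hΦ : Φ ∘ (fun σ => whitney lam σ.val) = fun σ => Pi.single σ 1 := by
    funext σ τ
    rw [Function.comp_apply, LinearMap.pi_apply, Pi.single_apply]
    split_ifs with h
    · rw [h, edgeEval_whitney_self hlam σ.2]
    · exact edgeEval_whitney_of_ne hlam σ.2 τ.2 fun h' => h (Subtype.ext h'.symm)
  exact LinearIndependent.of_comp Φ (hΦ ▸ Pi.linearIndependent_single_one _ ℝ)

end Whitney

theorem whitney_linearIndependent_finrank_general {n k : ℕ}
    (v : Fin (n + 1) → (Fin n → ℝ))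
    (lam : Fin (n + 1) → ((Fin n → ℝ) →ᵃ[ℝ] ℝ))
    (hlam : ∀ i j, lam i (v j) = if i = j then 1 else 0) :
    LinearIndependent ℝ
      (fun σ : {σ : Fin (k + 1) → Fin (n + 1) // StrictMono σ} => whitney lam σ.val) ∧
    Module.finrank ℝ
      (Submodule.span ℝ (Set.range
        (fun σ : {σ : Fin (k + 1) → Fin (n + 1) // StrictMono σ} => whitney lam σ.val))) =
      (n + 1).choose (k + 1) := by
  have hli := whitney_linearIndependent hlam (k := k)
  have := Fintype.ofFinite {σ : Fin (k + 1) → Fin (n + 1) // StrictMono σ}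
  refine ⟨hli, ?_⟩
  rw [finrank_span_eq_card hli, ← Nat.card_eq_fintype_card, Nat.card_strictMono_fin]

/-- The Whitney forms `ω_σ`, `σ ∈ S_k^n`, are linearly independent, and their
span `P_1^- Λ^k(T)` has dimension `binom(n+1, k+1)`. -/
theorem whitney_linearIndependent_finrank {n k : ℕ} (hn : 1 ≤ n) (hk : k ≤ n)
    (v : Fin (n + 1) → (Fin n → ℝ)) (hv : AffineIndependent ℝ v)
    (lam : Fin (n + 1) → ((Fin n → ℝ) →ᵃ[ℝ] ℝ))
    (hlam : ∀ i j, lam i (v j) = if i = j then 1 else 0) :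
    LinearIndependent ℝ
      (fun σ : {σ : Fin (k + 1) → Fin (n + 1) // StrictMono σ} => whitney lam σ.val) ∧
    Module.finrank ℝ
      (Submodule.span ℝ (Set.range
        (fun σ : {σ : Fin (k + 1) → Fin (n + 1) // StrictMono σ} => whitney lam σ.val))) =
      (n + 1).choose (k + 1) :=
  whitney_linearIndependent_finrank_general v lam hlam
end
end

section
/- (Basis theorem for high-order Whitney forms.) Let n ≥ 1, 0 ≤ k ≤ n and r ≥ 1. For each σ ∈ S_k^n let I_σ := {α ∈ I(n+1, r−1) : α_i = 0 for all i < σ(0)}. Then the set {λ^α ω_σ : σ ∈ S_k^n, α ∈ I_σ} is a basis of P_r^− Λ^k(T): these polynomial k-forms are linearly independent and they span P_r^− Λ^k(T). -/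
open MeasureTheory Matrix

noncomputable section

/-!
Spanning: a polynomial of degree `≤ r - 1` is a combination of barycentric monomials `λ^α` with
`|α| = r - 1`, because `1 = ∑ λᵢ` and every affine function is a combination of the `λᵢ`. If
`α ∉ I_σ`, let `t < σ 0` be the first index with `α t ≠ 0`; the Koszul relation
`λ_t ω_σ = ∑ⱼ (-1)ʲ λ_{σ j} ω_{(t, σ without σ j)}` turns `λ^α ω_σ` in one step into terms
`λ^β ω_τ` with `β ∈ I_τ`.

Independence: evaluate a vanishing combination on the edge vectors `v (ρ b) - v 0`. The result is
a polynomial in `λ`, homogeneous of degree `r` and zero on `∑ λᵢ = 1`, hence zero. For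
`ρ = σ₀ ∘ succ`, its coefficient of `λ^(α₀ + e_{σ₀ 0})` involves besides `(σ₀, α₀)` only pairs
`(σ, α)` that are lexicographically smaller in `(σ 0, -α 0)`.
-/

theorem linearIndependent_of_triangular {ι κ R M : Type*} [Ring R] [NoZeroDivisors R]
    [AddCommGroup M] [Module R M] [LinearOrder κ] (f : ι → M) (φ : ι → M →ₗ[R] R) (μ : ι → κ)
    (hdiag : ∀ i, φ i (f i) ≠ 0) (htri : ∀ i j, i ≠ j → φ j (f i) ≠ 0 → μ i < μ j) :
    LinearIndependent R f := by
  classical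
  rw [linearIndependent_iff']
  intro s g hg i hi
  by_contra hgi
  obtain ⟨j, hj, hmin⟩ := (s.filter (g · ≠ 0)).exists_min_image μ ⟨i, by simp [hi, hgi]⟩
  rw [Finset.mem_filter] at hj
  have hφ := congrArg (φ j) hg
  rw [map_sum, map_zero, Finset.sum_eq_single j] at hφ
  · simp only [map_smul, smul_eq_mul, mul_eq_zero] at hφ
    exact hφ.elim hj.2 (hdiag j)
  · intro b hb hbj
    by_cases hgb : g b = 0
    · simp [hgb]
    rw [map_smul, smul_eq_mul, mul_eq_zero, or_iff_right hgb]
    by_contra hne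
    exact (htri b j hbj hne).not_ge (hmin b (Finset.mem_filter.2 ⟨hb, hgb⟩))
  · exact fun h => (h hj.1).elim

theorem Finset.prod_pow_add_single {ι R : Type*} [Fintype ι] [DecidableEq ι] [CommMonoid R]
    (f : ι → R) (α : ι → ℕ) (t : ι) :
    ∏ i, f i ^ (α + Pi.single t 1 : ι → ℕ) i = (∏ i, f i ^ α i) * f t := by
  simp only [Pi.add_apply, pow_add, Finset.prod_mul_distrib]
  simp [Pi.single_apply, pow_ite]

namespace MvPolynomial

variable {ι R : Type*} [Fintype ι] [CommRing R] {p : MvPolynomial ι R} {d : ℕ}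

theorem IsHomogeneous.eval_smul (hp : p.IsHomogeneous d) (c : R) (y : ι → R) :
    eval (c • y) p = c ^ d * eval y p := by
  simp only [eval_eq', Finset.mul_sum, Pi.smul_apply, smul_eq_mul, mul_pow,
    Finset.prod_mul_distrib, Finset.prod_pow_eq_pow_sum]
  refine Finset.sum_congr rfl fun s hs => ?_
  have hdeg : ∑ i, s i = d := by
    rw [← Finsupp.degree_eq_sum]
    exact (hp.degree_eq_sum_deg_support hs).symm
  rw [hdeg]
  ring

theorem IsHomogeneous.eq_zero_of_forall_eval_eq_zero_of_sum_eq_one {K : Type*} [Field K]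
    [Infinite K] [Nonempty ι] {p : MvPolynomial ι K} (hp : p.IsHomogeneous d)
    (h : ∀ y : ι → K, ∑ i, y i = 1 → eval y p = 0) : p = 0 := by
  classical
  have hsum : ∀ y : ι → K, eval y (∑ i, X i) = ∑ i, y i := by simp
  have hX : (∑ i, X i : MvPolynomial ι K) ≠ 0 := by
    obtain ⟨i⟩ := ‹Nonempty ι›
    intro h0
    simpa using congrArg (eval (Pi.single i 1)) h0 |>.symm.trans (hsum _)
  refine (mul_eq_zero.mp (MvPolynomial.funext fun z => ?_)).resolve_right hX
  rw [map_mul, hsum, map_zero]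
  by_cases hz : ∑ i, z i = 0
  · rw [hz, mul_zero]
  have hscale : z = (∑ i, z i) • (∑ i, z i)⁻¹ • z := by
    rw [smul_smul, mul_inv_cancel₀ hz, one_smul]
  rw [hscale, hp.eval_smul, h _ (by simp [← Finset.mul_sum, inv_mul_cancel₀ hz]), mul_zero,
    zero_mul]

theorem exists_eval_eq_affineMap {n : ℕ} (g : (Fin n → ℝ) →ᵃ[ℝ] ℝ) :
    ∃ p : MvPolynomial (Fin n) ℝ, p.totalDegree ≤ 1 ∧ ∀ x, eval x p = g x := by
  refine ⟨C (g 0) + ∑ m, C (g.linear (Pi.single m 1)) * X m, ?_, fun x => ?_⟩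
  · refine (totalDegree_add _ _).trans (max_le (by simp) ?_)
    exact (IsHomogeneous.sum _ _ _ fun m _ => isHomogeneous_C_mul_X _ m).totalDegree_le
  · have hlin : g.linear x = ∑ m, g.linear (Pi.single m 1) * x m := by
      conv_lhs => rw [pi_eq_sum_univ' x]
      simp [mul_comm]
    have hx := g.linearMap_vsub x 0
    rw [vsub_eq_sub, vsub_eq_sub, sub_zero, hlin] at hx
    simp only [map_add, eval_C, map_sum, map_mul, eval_X, hx]
    ring

end MvPolynomial

section DualFamily

variable {ι k V P : Type*} [Fintype ι] [DecidableEq ι] [Field k] [AddCommGroup V] [Module k V]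
  [AddTorsor V P] {p : ι → P} {f : ι → P →ᵃ[k] k}

theorem apply_affineCombination_of_dual (hf : ∀ i j, f i (p j) = if i = j then 1 else 0)
    (i : ι) {w : ι → k} (hw : ∑ j, w j = 1) :
    f i (Finset.univ.affineCombination k p w) = w i := by
  rw [Finset.univ.map_affineCombination p w hw,
    Finset.univ.affineCombination_eq_linear_combination _ _ hw]
  simp [hf]

theorem affineIndependent_of_dual (hf : ∀ i j, f i (p j) = if i = j then 1 else 0) :
    AffineIndependent k p := by
  rw [affineIndependent_iff_eq_of_fintype_affineCombination_eq]
  intro w₁ w₂ hw₁ hw₂ h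
  funext i
  rw [← apply_affineCombination_of_dual hf i hw₁, ← apply_affineCombination_of_dual hf i hw₂, h]

theorem apply_eq_sum_dual_mul [FiniteDimensional k V]
    (hf : ∀ i j, f i (p j) = if i = j then 1 else 0)
    (hcard : Fintype.card ι = Module.finrank k V + 1) (g : P →ᵃ[k] k) (x : P) :
    g x = ∑ i, f i x * g (p i) := by
  have hspan :=
    (affineIndependent_of_dual hf).affineSpan_eq_top_iff_card_eq_finrank_add_one.2 hcard
  obtain ⟨w, hw, rfl⟩ := eq_affineCombination_of_mem_affineSpan_of_fintype
    (hspan ▸ AffineSubspace.mem_top k V x)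
  rw [Finset.univ.map_affineCombination p w hw,
    Finset.univ.affineCombination_eq_linear_combination _ _ hw]
  simp [apply_affineCombination_of_dual hf _ hw]

end DualFamily

namespace Whitney

open MvPolynomial

variable {n k r : ℕ}

section Koszul

variable (lam : Fin (n + 1) → ((Fin n → ℝ) →ᵃ[ℝ] ℝ))

def whitneyMatrix (σ : Fin (k + 1) → Fin (n + 1)) (x : Fin n → ℝ) (u : Fin k → (Fin n → ℝ)) :
    Matrix (Fin (k + 1)) (Fin (k + 1)) ℝ :=
  of fun i => Fin.cons (lam (σ i) x) fun b => (lam (σ i)).linear (u b)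

theorem whitney_eq_det (σ : Fin (k + 1) → Fin (n + 1)) (x : Fin n → ℝ)
    (u : Fin k → (Fin n → ℝ)) : whitney lam σ x u = (whitneyMatrix lam σ x u).det := by
  rw [det_succ_column_zero]
  rfl

/-- The Koszul relation `κ ∘ κ = 0`: Laplace expansion of a determinant whose first two columns
agree. -/
theorem sum_alternating_mul_whitney_eq_zero (τ : Fin (k + 2) → Fin (n + 1)) (x : Fin n → ℝ)
    (u : Fin k → (Fin n → ℝ)) :
    ∑ j : Fin (k + 2), (-1 : ℝ) ^ (j : ℕ) * lam (τ j) x * whitney lam (τ ∘ j.succAbove) x u =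
      0 := by
  let N : Matrix (Fin (k + 2)) (Fin (k + 2)) ℝ :=
    of fun i => Fin.cons (lam (τ i) x) (Fin.cons (lam (τ i) x) fun b => (lam (τ i)).linear (u b))
  have hN : N.det = 0 :=
    det_zero_of_column_eq (i := 0) (j := Fin.succ 0) (Fin.succ_ne_zero 0).symm fun _ => rfl
  rw [← hN, det_succ_column_zero]
  simp_rw [whitney_eq_det]
  rfl

theorem lam_mul_whitney (t : Fin (n + 1)) (σ : Fin (k + 1) → Fin (n + 1)) (x : Fin n → ℝ)
    (u : Fin k → (Fin n → ℝ)) :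
    lam t x * whitney lam σ x u = ∑ j : Fin (k + 1), (-1 : ℝ) ^ (j : ℕ) * lam (σ j) x *
      whitney lam (Fin.cons t (σ ∘ j.succAbove)) x u := by
  have h := sum_alternating_mul_whitney_eq_zero lam (Fin.cons t σ) x u
  have hcomp : ∀ j : Fin (k + 1), (Fin.cons t σ : Fin (k + 2) → Fin (n + 1)) ∘ j.succ.succAbove =
      Fin.cons t (σ ∘ j.succAbove) := fun j => by
    funext a
    cases a using Fin.cases <;> simp
  rw [Fin.sum_univ_succ] at h
  simp only [Fin.val_zero, pow_zero, one_mul, Fin.cons_zero, Fin.succAbove_zero,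
    Fin.cons_comp_succ, Fin.val_succ, pow_succ, Fin.cons_succ, hcomp] at h
  rw [eq_neg_of_add_eq_zero_left h, ← Finset.sum_neg_distrib]
  simp only [neg_mul, mul_neg_one, neg_neg]

theorem scaledWhitney_add_single (α : Fin (n + 1) → ℕ) (t : Fin (n + 1))
    (σ : Fin (k + 1) → Fin (n + 1)) :
    scaledWhitney lam (α + Pi.single t 1) σ = ∑ j : Fin (k + 1), (-1 : ℝ) ^ (j : ℕ) •
      scaledWhitney lam (α + Pi.single (σ j) 1) (Fin.cons t (σ ∘ j.succAbove)) := by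
  funext x u
  rw [Finset.sum_apply, Finset.sum_apply]
  simp only [scaledWhitney, Finset.prod_pow_add_single, Pi.smul_apply, smul_eq_mul]
  rw [mul_assoc, lam_mul_whitney, Finset.mul_sum]
  exact Finset.sum_congr rfl fun j _ => by ring

end Koszul

section Span

variable (lam : Fin (n + 1) → ((Fin n → ℝ) →ᵃ[ℝ] ℝ))

def baryHomogeneous (d : ℕ) : Submodule ℝ ((Fin n → ℝ) → ℝ) :=
  Submodule.span ℝ {f | ∃ α : Fin (n + 1) → ℕ, ∑ i, α i = d ∧ f = fun x => ∏ i, lam i x ^ α i}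

instance : SetLike.GradedMonoid (baryHomogeneous lam) where
  one_mem := Submodule.subset_span ⟨0, by simp, by funext; simp⟩
  mul_mem d e f g hf hg := by
    have hle : baryHomogeneous lam d * baryHomogeneous lam e ≤ baryHomogeneous lam (d + e) := by
      rw [baryHomogeneous, baryHomogeneous, Submodule.span_mul_span, Submodule.span_le]
      rintro _ ⟨_, ⟨α, hα, rfl⟩, _, ⟨β, hβ, rfl⟩, rfl⟩
      refine Submodule.subset_span ⟨α + β, by simp [Finset.sum_add_distrib, hα, hβ], ?_⟩
      funext x
      simp [pow_add, Finset.prod_mul_distrib]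
    exact hle (Submodule.mul_mem_mul hf hg)

def mulWhitney (σ : Fin (k + 1) → Fin (n + 1)) : ((Fin n → ℝ) → ℝ) →ₗ[ℝ] Form n k where
  toFun f x u := f x * whitney lam σ x u
  map_add' f g := by
    funext x u
    simp [add_mul]
  map_smul' c f := by
    funext x u
    simp [mul_assoc]

def minimalWhitney (r : ℕ) (q : MinIdx n k r) : Form n k :=
  scaledWhitney lam q.val.2 q.val.1

theorem scaledWhitney_mem_span_minimalWhitney {σ : Fin (k + 1) → Fin (n + 1)} (hσ : StrictMono σ)
    {α : Fin (n + 1) → ℕ} (hα : ∑ i, α i = r - 1) :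
    scaledWhitney lam α σ ∈ Submodule.span ℝ (Set.range (minimalWhitney lam r)) := by
  classical
  by_cases hgood : ∀ i, i < σ 0 → α i = 0
  · exact Submodule.subset_span ⟨⟨(σ, α), hσ, hα, hgood⟩, rfl⟩
  push Not at hgood
  obtain ⟨i₁, hi₁, hαi₁⟩ := hgood
  obtain ⟨t, ht, htmin⟩ := (Finset.univ.filter (α · ≠ 0)).exists_min_image id ⟨i₁, by simpa⟩
  simp only [Finset.mem_filter, Finset.mem_univ, true_and, id] at ht htmin
  have htσ : t < σ 0 := (htmin i₁ hαi₁).trans_lt hi₁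
  set β := α - Pi.single t 1
  have hαβ : α = β + Pi.single t 1 := by
    funext j
    by_cases hj : j = t
    · subst hj
      simp [β]
      omega
    · simp [β, hj]
  rw [hαβ, scaledWhitney_add_single]
  refine Submodule.sum_mem _ fun j _ => Submodule.smul_mem _ _ (Submodule.subset_span
    ⟨⟨(Fin.cons t (σ ∘ j.succAbove), β + Pi.single (σ j) 1), ?_, ?_, ?_⟩, rfl⟩)
  · exact Fin.strictMono_cons.2 ⟨fun a => htσ.trans_le (hσ.monotone (Fin.zero_le _)),
      hσ.comp (Fin.strictMono_succAbove j)⟩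
  · rw [← hα, hαβ]
    simp [Finset.sum_add_distrib]
  · intro m hm
    simp only [Fin.cons_zero] at hm
    have hαm : α m = 0 := by
      by_contra h
      exact (htmin m h).not_gt hm
    have hmσ : m ≠ σ j := (hm.trans (htσ.trans_le (hσ.monotone (Fin.zero_le _)))).ne
    simp [β, hαm, hmσ]

theorem span_minimalWhitney_le_PrMinus :
    Submodule.span ℝ (Set.range (minimalWhitney lam r)) ≤ PrMinus n k r lam := by
  rw [Submodule.span_le]
  rintro _ ⟨⟨⟨σ, α⟩, hσ, hα, -⟩, rfl⟩
  choose p hpdeg hp using fun i => exists_eval_eq_affineMap (lam i)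
  refine Submodule.subset_span ⟨∏ i, p i ^ α i, σ, hσ, ?_, ?_⟩
  · refine (totalDegree_finsetProd _ _).trans ?_
    calc ∑ i, (p i ^ α i).totalDegree ≤ ∑ i, α i * 1 :=
          Finset.sum_le_sum fun i _ =>
            (totalDegree_pow _ _).trans (Nat.mul_le_mul_left _ (hpdeg i))
      _ = r - 1 := by simpa using hα
  · funext x u
    simp [minimalWhitney, scaledWhitney, hp]

variable {v : Fin (n + 1) → (Fin n → ℝ)} {lam}

theorem affineMap_mem_baryHomogeneous_one
    (hlam : ∀ i j, lam i (v j) = if i = j then 1 else 0) (g : (Fin n → ℝ) →ᵃ[ℝ] ℝ) :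
    ⇑g ∈ baryHomogeneous lam 1 := by
  have hg : ⇑g = ∑ i, g (v i) • ⇑(lam i) := by
    funext x
    simp [apply_eq_sum_dual_mul hlam (by simp) g x, mul_comm]
  rw [hg]
  refine Submodule.sum_mem _ fun i _ => Submodule.smul_mem _ _ (Submodule.subset_span ?_)
  exact ⟨Pi.single i 1, by simp, by funext x; simp [Pi.single_apply, pow_ite]⟩

theorem eval_mem_baryHomogeneous (hlam : ∀ i j, lam i (v j) = if i = j then 1 else 0) {d : ℕ}
    {p : MvPolynomial (Fin n) ℝ} (hp : p.totalDegree ≤ d) :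
    (fun x => eval x p) ∈ baryHomogeneous lam d := by
  have hmon : ∀ s ∈ p.support, (fun x : Fin n → ℝ => ∏ m, x m ^ s m) ∈ baryHomogeneous lam d := by
    intro s hs
    have hdeg : ∑ m, s m ≤ d := by
      refine le_trans ?_ (le_totalDegree hs |>.trans hp)
      rw [Finsupp.sum_fintype _ _ fun _ => rfl]
    have hprod := SetLike.prod_pow_mem_graded (baryHomogeneous lam) (fun _ => 1)
      (fun m (x : Fin n → ℝ) => x m) s (F := Finset.univ)
      fun m _ => affineMap_mem_baryHomogeneous_one hlam
        (LinearMap.proj (R := ℝ) (φ := fun _ : Fin n => ℝ) m).toAffineMap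
    have hone := SetLike.pow_mem_graded (d - ∑ m, s m)
      (affineMap_mem_baryHomogeneous_one hlam (AffineMap.const ℝ (Fin n → ℝ) (1 : ℝ)))
    have hmul := SetLike.mul_mem_graded hprod hone
    rw [show ∑ m, s m • 1 + (d - ∑ m, s m) • 1 = d by simp only [smul_eq_mul, mul_one]; omega]
      at hmul
    convert hmul using 1
    funext x
    simp
  have hp : (fun x => eval x p) =
      ∑ s ∈ p.support, coeff s p • fun x : Fin n → ℝ => ∏ m, x m ^ s m := by
    funext x
    simp [eval_eq']
  rw [hp]
  exact Submodule.sum_mem _ fun s hs => Submodule.smul_mem _ _ (hmon s hs)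

theorem PrMinus_le_span_minimalWhitney (hlam : ∀ i j, lam i (v j) = if i = j then 1 else 0) :
    PrMinus n k r lam ≤ Submodule.span ℝ (Set.range (minimalWhitney lam r)) := by
  rw [PrMinus, Submodule.span_le]
  rintro _ ⟨p, σ, hσ, hp, rfl⟩
  have hmap : (baryHomogeneous lam (r - 1)).map (mulWhitney lam σ) ≤
      Submodule.span ℝ (Set.range (minimalWhitney lam r)) := by
    rw [baryHomogeneous, Submodule.map_span_le]
    rintro _ ⟨α, hα, rfl⟩
    exact scaledWhitney_mem_span_minimalWhitney lam hσ hα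
  exact hmap (Submodule.mem_map_of_mem (eval_mem_baryHomogeneous hlam hp))

end Span

section Independence

/-- `dλ_τ` evaluated on the edge vectors `v (ρ b) - v 0`, using `dλ_t (v s - v 0) = δ_ts - δ_t0`. -/
def edgeDet (τ ρ : Fin k → Fin (n + 1)) : ℝ :=
  det (of fun a b => (if τ a = ρ b then 1 else 0) - if τ a = 0 then 1 else 0)

theorem edgeDet_of_forall_ne_zero {τ ρ : Fin k → Fin (n + 1)} (hτ : StrictMono τ)
    (hρ : StrictMono ρ) (hτ0 : ∀ a, τ a ≠ 0) : edgeDet τ ρ = if τ = ρ then 1 else 0 := by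
  classical
  have hM : (of fun a b => (if τ a = ρ b then (1 : ℝ) else 0) - if τ a = 0 then 1 else 0) =
      (1 : Matrix (Fin (n + 1)) (Fin (n + 1)) ℝ).submatrix τ ρ := by
    ext a b
    simp [hτ0 a, one_apply]
  rw [edgeDet, hM]
  split_ifs with h
  · subst h
    rw [submatrix_one _ hτ.injective, det_one]
  · have hrow : ∃ a, ∀ b, τ a ≠ ρ b := by
      by_contra! hsub
      refine h ((hτ.range_inj hρ).1 (Set.eq_of_subset_of_ncard_le ?_ ?_ (Set.finite_range ρ)))
      · rintro _ ⟨a, rfl⟩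
        obtain ⟨b, hb⟩ := hsub a
        exact ⟨b, hb.symm⟩
      · rw [Set.ncard_range_of_injective hρ.injective, Set.ncard_range_of_injective hτ.injective]
    obtain ⟨a, ha⟩ := hrow
    exact det_eq_zero_of_row_eq_zero a fun b => by simp [one_apply, ha b]

/-- `λ^α ω_σ` evaluated on the edge vectors `v (ρ b) - v 0`, as a polynomial in the barycentric
coordinates. -/
def whitneyPoly (α : Fin (n + 1) → ℕ) (σ : Fin (k + 1) → Fin (n + 1)) (ρ : Fin k → Fin (n + 1)) :
    MvPolynomial (Fin (n + 1)) ℝ :=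
  ∑ i, monomial (Finsupp.equivFunOnFinite.symm (α + Pi.single (σ i) 1))
    ((-1) ^ (i : ℕ) * edgeDet (σ ∘ i.succAbove) ρ)

theorem isHomogeneous_whitneyPoly (α : Fin (n + 1) → ℕ) (σ : Fin (k + 1) → Fin (n + 1))
    (ρ : Fin k → Fin (n + 1)) : (whitneyPoly α σ ρ).IsHomogeneous (∑ i, α i + 1) :=
  IsHomogeneous.sum _ _ _ fun i _ => isHomogeneous_monomial _ <| by
    simp [Finsupp.degree_eq_sum, Finset.sum_add_distrib]

theorem coeff_whitneyPoly (β α : Fin (n + 1) → ℕ) (σ : Fin (k + 1) → Fin (n + 1))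
    (ρ : Fin k → Fin (n + 1)) :
    coeff (Finsupp.equivFunOnFinite.symm β) (whitneyPoly α σ ρ) =
      ∑ i, if α + Pi.single (σ i) 1 = β then (-1) ^ (i : ℕ) * edgeDet (σ ∘ i.succAbove) ρ
        else 0 := by
  classical
  simp only [whitneyPoly, coeff_sum, coeff_monomial, Equiv.apply_eq_iff_eq]

theorem coeff_whitneyPoly_self {σ : Fin (k + 1) → Fin (n + 1)} (hσ : StrictMono σ)
    (α : Fin (n + 1) → ℕ) :
    coeff (Finsupp.equivFunOnFinite.symm (α + Pi.single (σ 0) 1))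
      (whitneyPoly α σ (σ ∘ Fin.succ)) = 1 := by
  have hsucc : StrictMono (σ ∘ Fin.succ) := hσ.comp Fin.strictMono_succ
  rw [coeff_whitneyPoly, Finset.sum_eq_single 0]
  · rw [if_pos rfl, Fin.succAbove_zero, edgeDet_of_forall_ne_zero hsucc hsucc
      fun a => ((Fin.zero_le _).trans_lt (hσ a.succ_pos)).ne', if_pos rfl]
    simp
  · intro i _ hi
    rw [if_neg]
    intro h
    simpa [Pi.single_apply, hσ.injective.ne hi] using congrFun h (σ i)
  · simp

theorem toLex_lt_of_edgeDet_ne_zero {σ σ₀ : Fin (k + 1) → Fin (n + 1)} {α α₀ : Fin (n + 1) → ℕ}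
    (hσ : StrictMono σ) (hσ₀ : StrictMono σ₀) (hα : ∀ j, j < σ 0 → α j = 0)
    (hα₀ : ∀ j, j < σ₀ 0 → α₀ j = 0) {i : Fin (k + 1)}
    (hβ : α + Pi.single (σ i) 1 = α₀ + Pi.single (σ₀ 0) 1)
    (hdet : edgeDet (σ ∘ i.succAbove) (σ₀ ∘ Fin.succ) ≠ 0) (hne : (σ, α) ≠ (σ₀, α₀)) :
    toLex (σ 0, OrderDual.toDual (α 0)) < toLex (σ₀ 0, OrderDual.toDual (α₀ 0)) := by
  have hβj : ∀ j, α j + (if j = σ i then 1 else 0) = α₀ j + if j = σ₀ 0 then 1 else 0 :=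
    fun j => by simpa [Pi.single_apply] using congrFun hβ j
  have hsucc₀ : StrictMono (σ₀ ∘ Fin.succ) := hσ₀.comp Fin.strictMono_succ
  have hi_ge : σ₀ 0 ≤ σ i := by
    by_contra! h
    simpa [h.ne, hα₀ _ h] using hβj (σ i)
  have h0_le : σ 0 ≤ σ₀ 0 := by
    rcases hi_ge.eq_or_lt with h | h
    · exact h ▸ hσ.monotone (Fin.zero_le i)
    · by_contra! h'
      simpa [h.ne, hα _ h'] using hβj (σ₀ 0)
  rw [Prod.Lex.toLex_lt_toLex]
  refine h0_le.lt_or_eq.imp id fun (h0 : σ 0 = σ₀ 0) => ⟨h0, ?_⟩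
  rw [OrderDual.toDual_lt_toDual]
  rcases eq_or_ne i 0 with rfl | hi
  · have hrows : ∀ a, (σ ∘ Fin.succAbove 0) a ≠ 0 :=
      fun a => ((Fin.zero_le _).trans_lt (hσ (Fin.succ_pos a))).ne'
    rw [edgeDet_of_forall_ne_zero (hσ.comp (Fin.strictMono_succAbove 0)) hsucc₀ hrows] at hdet
    have htail : σ ∘ Fin.succ = σ₀ ∘ Fin.succ := by
      by_contra h
      exact hdet (if_neg (by simpa [Fin.succAbove_zero] using h))
    refine (hne (Prod.ext (funext fun a => ?_) (funext fun j => ?_))).elim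
    · cases a using Fin.cases with
      | zero => exact h0
      | succ a => exact congrFun htail a
    · show α j = α₀ j
      have := hβj j
      rw [h0] at this
      omega
  · have hσi : σ₀ 0 < σ i := h0 ▸ hσ (Fin.pos_of_ne_zero hi)
    have hαm : α (σ₀ 0) = α₀ (σ₀ 0) + 1 := by simpa [hσi.ne] using hβj (σ₀ 0)
    rcases eq_or_ne (σ₀ 0) 0 with hm | hm
    · rw [hm] at hαm
      omega
    · exfalso
      have : NeZero k :=
        ⟨fun hk => hi (Fin.ext (by have := i.isLt; simp only [Fin.val_zero]; omega))⟩
      have hrows : ∀ a, (σ ∘ i.succAbove) a ≠ 0 := fun a h =>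
        hm (Fin.le_zero_iff.1 (h0 ▸ (hσ.monotone (Fin.zero_le _)).trans_eq h))
      rw [edgeDet_of_forall_ne_zero (hσ.comp (Fin.strictMono_succAbove i)) hsucc₀ hrows] at hdet
      have h1 := congrFun (of_not_not (fun h => hdet (if_neg h))) 0
      simp only [Function.comp_apply, Fin.succAbove_ne_zero_zero hi] at h1
      exact (hσ₀ (Fin.succ_pos 0)).ne (h0.symm.trans h1)

variable {v : Fin (n + 1) → (Fin n → ℝ)} {lam : Fin (n + 1) → ((Fin n → ℝ) →ᵃ[ℝ] ℝ)}

theorem eval_whitneyPoly (hlam : ∀ i j, lam i (v j) = if i = j then 1 else 0)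
    (α : Fin (n + 1) → ℕ) (σ : Fin (k + 1) → Fin (n + 1)) (ρ : Fin k → Fin (n + 1))
    (x : Fin n → ℝ) :
    eval (fun i => lam i x) (whitneyPoly α σ ρ) =
      scaledWhitney lam α σ x fun b => v (ρ b) - v 0 := by
  have hedge : ∀ t s, (lam t).linear (v s - v 0) =
      (if t = s then 1 else 0) - if t = 0 then 1 else 0 := fun t s => by
    rw [← vsub_eq_sub, AffineMap.linearMap_vsub, hlam, hlam, vsub_eq_sub]
  simp only [whitneyPoly, scaledWhitney, whitney, edgeDet, hedge, map_sum, eval_monomial,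
    Finsupp.prod_fintype _ _ (fun _ => pow_zero _), Finsupp.coe_equivFunOnFinite_symm,
    Finset.prod_pow_add_single, Finset.mul_sum, Function.comp_apply]
  exact Finset.sum_congr rfl fun i _ => by ring

theorem linearIndependent_minimalWhitney
    (hlam : ∀ i j, lam i (v j) = if i = j then 1 else 0) :
    LinearIndependent ℝ (minimalWhitney lam r : MinIdx n k r → Form n k) := by
  let F (q : MinIdx n k r) (ρ : Fin k → Fin (n + 1)) := whitneyPoly q.1.2 q.1.1 ρ
  let φ (q : MinIdx n k r) : ((Fin k → Fin (n + 1)) → MvPolynomial (Fin (n + 1)) ℝ) →ₗ[ℝ] ℝ :=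
    (lcoeff ℝ (Finsupp.equivFunOnFinite.symm (q.1.2 + Pi.single (q.1.1 0) 1))).comp
      (LinearMap.proj (q.1.1 ∘ Fin.succ))
  have hF : LinearIndependent ℝ F := by
    refine linearIndependent_of_triangular F φ
      (fun q => toLex (q.1.1 0, OrderDual.toDual (q.1.2 0))) (fun q => ?_) fun q q₀ hne h => ?_
    · simp [φ, F, coeff_whitneyPoly_self q.2.1]
    · simp only [φ, F, LinearMap.comp_apply, LinearMap.proj_apply, lcoeff_apply,
        coeff_whitneyPoly] at h
      obtain ⟨i, -, hi⟩ := Finset.exists_ne_zero_of_sum_ne_zero h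
      have hβ : q.1.2 + Pi.single (q.1.1 i) 1 = q₀.1.2 + Pi.single (q₀.1.1 0) 1 := by
        by_contra hβ
        exact hi (if_neg hβ)
      rw [if_pos hβ] at hi
      exact toLex_lt_of_edgeDet_ne_zero q.2.1 q₀.2.1 q.2.2.2 q₀.2.2.2 hβ
        (right_ne_zero_of_mul hi) fun h => hne (Subtype.ext h)
  rw [linearIndependent_iff'] at hF ⊢
  intro s g hg
  refine hF s g (funext fun ρ => ?_)
  have hhom : (∑ q ∈ s, g q • F q ρ).IsHomogeneous (r - 1 + 1) := by
    rw [← mem_homogeneousSubmodule]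
    refine Submodule.sum_mem _ fun q _ => Submodule.smul_mem _ _ ?_
    rw [mem_homogeneousSubmodule, ← q.2.2.1]
    exact isHomogeneous_whitneyPoly _ _ _
  rw [Finset.sum_apply]
  refine hhom.eq_zero_of_forall_eval_eq_zero_of_sum_eq_one fun y hy => ?_
  obtain ⟨x, rfl⟩ : ∃ x, (fun i => lam i x) = y :=
    ⟨Finset.univ.affineCombination ℝ v y, funext fun i => apply_affineCombination_of_dual hlam i hy⟩
  have hx := congrFun (congrFun hg x) fun b => v (ρ b) - v 0
  simp only [Finset.sum_apply, Pi.smul_apply, smul_eq_mul, Pi.zero_apply, minimalWhitney] at hx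
  simpa [F, eval_whitneyPoly hlam] using hx

end Independence

end Whitney

theorem scaledWhitney_basis_general {n k r : ℕ}
    (v : Fin (n + 1) → (Fin n → ℝ))
    (lam : Fin (n + 1) → ((Fin n → ℝ) →ᵃ[ℝ] ℝ))
    (hlam : ∀ i j, lam i (v j) = if i = j then 1 else 0) :
    LinearIndependent ℝ
      (fun q : MinIdx n k r => scaledWhitney lam q.val.2 q.val.1) ∧
    Submodule.span ℝ
      (Set.range (fun q : MinIdx n k r => scaledWhitney lam q.val.2 q.val.1)) =
      PrMinus n k r lam :=
  ⟨Whitney.linearIndependent_minimalWhitney hlam,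
    le_antisymm (Whitney.span_minimalWhitney_le_PrMinus lam)
      (Whitney.PrMinus_le_span_minimalWhitney hlam)⟩

/-- (Basis theorem for high-order Whitney forms.) The forms `λ^α ω_σ`, for
`σ ∈ S_k^n` and `α ∈ I_σ`, are linearly independent and span `P_r^- Λ^k(T)`. -/
theorem scaledWhitney_basis {n k r : ℕ} (hn : 1 ≤ n) (hk : k ≤ n) (hr : 1 ≤ r)
    (v : Fin (n + 1) → (Fin n → ℝ)) (hv : AffineIndependent ℝ v)
    (lam : Fin (n + 1) → ((Fin n → ℝ) →ᵃ[ℝ] ℝ))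
    (hlam : ∀ i j, lam i (v j) = if i = j then 1 else 0) :
    LinearIndependent ℝ
      (fun q : MinIdx n k r => scaledWhitney lam q.val.2 q.val.1) ∧
    Submodule.span ℝ
      (Set.range (fun q : MinIdx n k r => scaledWhitney lam q.val.2 q.val.1)) =
      PrMinus n k r lam :=
  scaledWhitney_basis_general v lam hlam
end
end

section
/- Let n ≥ 1, r ≥ 1 and 0 ≤ k ≤ n. Then binom(r+k−1, k) · binom(n+r, n−k) ≤ binom(n+r, n) · binom(n, k), with equality if and only if k = 0. (The left-hand side is the dimension of P_r^− Λ^k and the right-hand side is the dimension of P_r Λ^k; hence the inclusion P_r^− Λ^k ⊆ P_r Λ^k is strict unless k = 0.) -/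
open MeasureTheory Matrix

noncomputable section

/-! The two sides satisfy `(r + k) · LHS = r · RHS`: trinomial revision gives
`C(n+r, n) C(n, k) = C(n+r, n−k) C(r+k, k)`, and absorption gives
`(r + k) C(r+k−1, k) = r C(r+k, k)`. As the right-hand side is positive, `LHS ≤ RHS`, with
equality exactly when `k = 0`. -/

theorem Nat.add_mul_choose_sub_one (r k : ℕ) :
    (r + k) * (r + k - 1).choose k = r * (r + k).choose k := by
  rcases r with _ | r
  · rcases k with _ | k <;> simp
  · have absorption := Nat.choose_mul_succ_eq (r + k) k
    rw [show r + k + 1 - k = r + 1 by omega] at absorption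
    rw [show r + 1 + k - 1 = r + k by omega, show r + 1 + k = r + k + 1 by omega]
    linarith

theorem Nat.choose_mul_choose_eq_choose_sub_mul {n k : ℕ} (r : ℕ) (hk : k ≤ n) :
    (n + r).choose n * n.choose k = (n + r).choose (n - k) * (r + k).choose k := by
  rw [← Nat.choose_symm hk, Nat.choose_mul (Nat.sub_le n k),
    show n + r - (n - k) = r + k by omega, show n - (n - k) = k by omega]

theorem dim_prMinus_le_dim_pr_general {n k r : ℕ} (hr : 1 ≤ r) (hk : k ≤ n) :
    (r + k - 1).choose k * (n + r).choose (n - k) ≤ (n + r).choose n * n.choose k ∧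
    ((r + k - 1).choose k * (n + r).choose (n - k) = (n + r).choose n * n.choose k ↔
      k = 0) := by
  set lhs := (r + k - 1).choose k * (n + r).choose (n - k) with hlhs
  set rhs := (n + r).choose n * n.choose k with hrhs
  have rhs_pos : 0 < rhs := Nat.mul_pos (Nat.choose_pos (by omega)) (Nat.choose_pos hk)
  have scaled_eq : (r + k) * lhs = r * rhs := by
    rw [hlhs, hrhs, Nat.choose_mul_choose_eq_choose_sub_mul r hk, mul_left_comm r,
      ← Nat.add_mul_choose_sub_one]
    ring
  refine ⟨Nat.le_of_mul_le_mul_left ?_ hr, ⟨fun h => ?_, fun h => ?_⟩⟩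
  · calc r * lhs ≤ (r + k) * lhs := Nat.mul_le_mul_right _ (Nat.le_add_right r k)
      _ = r * rhs := scaled_eq
  · rw [h] at scaled_eq
    have := Nat.eq_of_mul_eq_mul_right rhs_pos scaled_eq
    omega
  · subst h
    exact Nat.eq_of_mul_eq_mul_left hr (by simpa using scaled_eq)

/-- `binom(r+k−1,k)·binom(n+r,n−k) ≤ binom(n+r,n)·binom(n,k)`, with equality
iff `k = 0`: the inclusion `P_r^- Λ^k ⊆ P_r Λ^k` is strict unless `k = 0`. -/
theorem dim_prMinus_le_dim_pr {n k r : ℕ} (hn : 1 ≤ n) (hr : 1 ≤ r) (hk : k ≤ n) :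
    (r + k - 1).choose k * (n + r).choose (n - k) ≤ (n + r).choose n * n.choose k ∧
    ((r + k - 1).choose k * (n + r).choose (n - k) = (n + r).choose n * n.choose k ↔
      k = 0) :=
  dim_prMinus_le_dim_pr_general hr hk
end
end

section
/- Let n ≥ 1, r ≥ 1 and 0 ≤ k ≤ n. Then binom(n+1, k+1) · binom(n+r−1, n) ≥ binom(r+k−1, k) · binom(n+r, n−k), with equality if and only if k = n or r = 1. (The left-hand side is the cardinality of the index set {(σ,α) : σ ∈ S_k^n, α ∈ I(n+1,r−1)} parametrizing the redundant set X_r^k(T) of small simplices, and the right-hand side is dim P_r^− Λ^k(T); hence the redundant set of weights is minimal precisely when k = n or r = 1, in addition to the collapsing case k = 0.) -/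
open MeasureTheory Matrix

noncomputable section

/-! Absorption (`(k+1)·C(n+1,k+1) = (n+1)·C(n,k)` and its relatives) and trinomial revision
`C(n+r,n)·C(n,n−k) = C(n+r,n−k)·C(r+k,k)` give
`(k+1)(n+r) · C(n+1,k+1)·C(n+r−1,n) = (n+1)(r+k) · C(r+k−1,k)·C(n+r,n−k)`.
The two factors in front differ by `(n+1)(r+k) − (k+1)(n+r) = (n−k)(r−1) ≥ 0`, which vanishes
exactly when `k = n` or `r = 1`. -/

namespace Nat

theorem choose_mul_choose_add_eq {n k : ℕ} (m : ℕ) (hk : k ≤ n) :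
    n.choose k * (n + m + 1).choose n = (m + k + 1).choose k * (n + m + 1).choose (n - k) := by
  have h := choose_mul (n := n + m + 1) (k := n) (Nat.sub_le n k)
  rw [choose_symm hk, show n + m + 1 - (n - k) = m + k + 1 by omega, Nat.sub_sub_self hk] at h
  rw [mul_comm, h, mul_comm]

theorem succ_mul_choose_succ_mul_choose_eq {n k : ℕ} (m : ℕ) (hk : k ≤ n) :
    (k + 1) * (n + m + 1) * ((n + 1).choose (k + 1) * (n + m).choose n) =
      (n + 1) * (m + k + 1) * ((m + k).choose k * (n + m + 1).choose (n - k)) := by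
  have h₁ := add_one_mul_choose_eq n k
  have h₂ := choose_mul_succ_eq (n + m) n
  have h₃ := choose_mul_succ_eq (m + k) k
  rw [show n + m + 1 - n = m + 1 by omega] at h₂
  rw [show m + k + 1 - k = m + 1 by omega] at h₃
  calc (k + 1) * (n + m + 1) * ((n + 1).choose (k + 1) * (n + m).choose n)
      = ((n + 1).choose (k + 1) * (k + 1)) * ((n + m).choose n * (n + m + 1)) := by ring
    _ = (n + 1) * (m + 1) * (n.choose k * (n + m + 1).choose n) := by rw [← h₁, h₂]; ring
    _ = (n + 1) * ((m + k + 1).choose k * (m + 1)) * (n + m + 1).choose (n - k) := by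
      rw [choose_mul_choose_add_eq m hk]; ring
    _ = (n + 1) * (m + k + 1) * ((m + k).choose k * (n + m + 1).choose (n - k)) := by
      rw [← h₃]; ring

theorem le_and_eq_iff_of_mul_eq_add_mul {a b c d : ℕ} (hc : 0 < c) (hb : 0 < b)
    (h : c * a = (c + d) * b) : b ≤ a ∧ (a = b ↔ d = 0) := by
  refine ⟨Nat.le_of_mul_le_mul_left (by nlinarith) hc, fun hab => ?_, fun hd => ?_⟩
  · subst hab
    nlinarith
  · subst hd
    exact Nat.eq_of_mul_eq_mul_left hc (by simpa using h)

end Nat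

theorem card_redundant_ge_dim_general {n k r : ℕ} (hr : 1 ≤ r) (hk : k ≤ n) :
    (r + k - 1).choose k * (n + r).choose (n - k) ≤
      (n + 1).choose (k + 1) * (n + r - 1).choose n ∧
    ((n + 1).choose (k + 1) * (n + r - 1).choose n =
        (r + k - 1).choose k * (n + r).choose (n - k) ↔ k = n ∨ r = 1) := by
  obtain ⟨m, rfl⟩ : ∃ m, r = m + 1 := ⟨r - 1, by omega⟩
  rw [show m + 1 + k - 1 = m + k by omega, show n + (m + 1) - 1 = n + m by omega,
    ← add_assoc]
  have hgap : (n + 1) * (m + k + 1) = (k + 1) * (n + m + 1) + (n - k) * m := by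
    obtain ⟨a, rfl⟩ := Nat.exists_eq_add_of_le hk
    rw [Nat.add_sub_cancel_left]; ring
  have hpos : 0 < (m + k).choose k * (n + m + 1).choose (n - k) :=
    Nat.mul_pos (Nat.choose_pos (by omega)) (Nat.choose_pos (by omega))
  have key := Nat.succ_mul_choose_succ_mul_choose_eq m hk
  rw [hgap] at key
  obtain ⟨hle, heq⟩ := Nat.le_and_eq_iff_of_mul_eq_add_mul (by positivity) hpos key
  refine ⟨hle, heq.trans ?_⟩
  rw [Nat.mul_eq_zero]
  omega

/-- `binom(n+1,k+1)·binom(n+r−1,n) ≥ binom(r+k−1,k)·binom(n+r,n−k)`, with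
equality iff `k = n` or `r = 1`: the redundant set `X_r^k(T)` is minimal exactly in these
cases. -/
theorem card_redundant_ge_dim {n k r : ℕ} (hn : 1 ≤ n) (hr : 1 ≤ r) (hk : k ≤ n) :
    (r + k - 1).choose k * (n + r).choose (n - k) ≤
      (n + 1).choose (k + 1) * (n + r - 1).choose n ∧
    ((n + 1).choose (k + 1) * (n + r - 1).choose n =
        (r + k - 1).choose k * (n + r).choose (n - k) ↔ k = n ∨ r = 1) :=
  card_redundant_ge_dim_general hr hk
end
end

section
/- (Unisolvence of segmental degrees of freedom / histopolation on the real line.) Let r ≥ 0 and let s_0 = [a_0, b_0], …, s_r = [a_r, b_r] be r+1 intervals in ℝ with a_i < b_i for each i and b_i ≤ a_{i+1} for i = 0,…,r−1 (non-overlapping interiors, ordered left to right). If p is a real polynomial of degree ≤ r with ∫_{a_i}^{b_i} p(x) dx = 0 for every i = 0,…,r, then p = 0. Equivalently, the linear map sending a polynomial of degree ≤ r to its r+1 integrals over the s_i is an isomorphism onto ℝ^{r+1}, so the least squares/histopolation problem on such segments has a unique solution. -/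
open MeasureTheory Matrix

noncomputable section

open Polynomial

/-! Each integral condition forces, by Rolle's theorem applied to a primitive, a root of `p` in
the interior of the corresponding interval. These `r + 1` roots are distinct because the
intervals have disjoint interiors, so `p`, of degree `≤ r`, vanishes. A linear map between
spaces of the same finite dimension `r + 1` is bijective once it is injective. -/

theorem exists_mem_Ioo_eq_zero_of_intervalIntegral_eq_zero {f : ℝ → ℝ} (hf : Continuous f)
    {a b : ℝ} (hab : a < b) (h : ∫ x in a..b, f x = 0) : ∃ c ∈ Set.Ioo a b, f c = 0 :=
  exists_hasDerivAt_eq_zero hab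
    (intervalIntegral.continuous_primitive (fun _ _ => hf.intervalIntegrable _ _) a).continuousOn
    (by simp [h]) fun x _ => (hf.integral_hasStrictDerivAt a x).hasDerivAt

theorem Fin.strictMono_of_forall_mem_Ioo {α : Type*} [Preorder α] {n : ℕ}
    {a b x : Fin (n + 1) → α} (hx : ∀ i, x i ∈ Set.Ioo (a i) (b i))
    (hord : ∀ i : Fin n, b i.castSucc ≤ a i.succ) : StrictMono x :=
  Fin.strictMono_iff_lt_succ.2 fun i =>
    calc x i.castSucc < b i.castSucc := (hx i.castSucc).2
      _ ≤ a i.succ := hord i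
      _ < x i.succ := (hx i.succ).1

theorem Polynomial.eq_zero_of_forall_intervalIntegral_eq_zero {r : ℕ} {a b : Fin (r + 1) → ℝ}
    (hab : ∀ i, a i < b i) (hord : ∀ i : Fin r, b i.castSucc ≤ a i.succ) {p : ℝ[X]}
    (hp : p.natDegree ≤ r) (hint : ∀ i, ∫ x in a i..b i, p.eval x = 0) : p = 0 := by
  choose x hx hroot using fun i =>
    exists_mem_Ioo_eq_zero_of_intervalIntegral_eq_zero p.continuous (hab i) (hint i)
  exact p.eq_zero_of_natDegree_lt_card_of_eval_eq_zero
    (Fin.strictMono_of_forall_mem_Ioo hx hord).injective hroot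
    (by simpa using Nat.lt_succ_of_le hp)

instance Polynomial.degreeLE.finite (R : Type*) [Semiring R] (n : ℕ) :
    Module.Finite R (degreeLE R n) :=
  Module.Finite.equiv (LinearEquiv.ofEq _ _ degreeLT_succ_eq_degreeLE)

theorem Polynomial.finrank_degreeLE (K : Type*) [Field K] (n : ℕ) :
    Module.finrank K (degreeLE K n) = n + 1 := by
  rw [← (LinearEquiv.ofEq _ _ degreeLT_succ_eq_degreeLE).finrank_eq,
    Module.finrank_eq_card_basis (degreeLT.basis K (n + 1)), Fintype.card_fin]

def Polynomial.intervalIntegralₗ (a b : ℝ) : ℝ[X] →ₗ[ℝ] ℝ where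
  toFun p := ∫ x in a..b, p.eval x
  map_add' p q := by
    simpa only [eval_add] using intervalIntegral.integral_add
      (p.continuous.intervalIntegrable a b) (q.continuous.intervalIntegrable a b)
  map_smul' c p := by
    simpa only [eval_smul, smul_eq_mul, RingHom.id_apply] using
      intervalIntegral.integral_const_mul c _

/-- (Unisolvence of segmental degrees of freedom on the real line.) If
`s₀ = [a₀,b₀], …, s_r = [a_r,b_r]` are `r+1` intervals, nondegenerate and ordered left to
right with non-overlapping interiors, then a polynomial of degree `≤ r` whose integrals over
all the `sᵢ` vanish is zero; equivalently, the map sending a polynomial of degree `≤ r` to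
its `r+1` integrals is a bijection onto `ℝ^{r+1}`. -/
theorem histopolation_unisolvent (r : ℕ) (a b : Fin (r + 1) → ℝ)
    (hab : ∀ i, a i < b i) (hord : ∀ i : Fin r, b i.castSucc ≤ a i.succ) :
    (∀ p : Polynomial ℝ, p.natDegree ≤ r →
      (∀ i, (∫ x in (a i)..(b i), Polynomial.eval x p) = 0) → p = 0) ∧
    Function.Bijective
      (fun p : Polynomial.degreeLE ℝ (r : ℕ) =>
        fun i : Fin (r + 1) => ∫ x in (a i)..(b i), Polynomial.eval x p.val) := by
  have hzero : ∀ p : ℝ[X], p.natDegree ≤ r →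
      (∀ i, ∫ x in a i..b i, p.eval x = 0) → p = 0 := fun _ =>
    eq_zero_of_forall_intervalIntegral_eq_zero hab hord
  let L := (LinearMap.pi fun i => intervalIntegralₗ (a i) (b i)) ∘ₗ (degreeLE ℝ r).subtype
  have hinj : Function.Injective L := (injective_iff_map_eq_zero L).2 fun p hp =>
    Subtype.ext <| hzero p (natDegree_le_iff_degree_le.2 (mem_degreeLE.1 p.2)) (congrFun hp)
  have hdim : Module.finrank ℝ (degreeLE ℝ r) = Module.finrank ℝ (Fin (r + 1) → ℝ) := by
    simp [finrank_degreeLE]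
  exact ⟨hzero, hinj, (LinearMap.injective_iff_surjective_of_finrank_eq_finrank hdim).1 hinj⟩
end
end
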